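/- arXiv:2412.18730 — 2 statements merged into one kernel-verified Lean document; each statement's English description precedes it below -/
import Mathlib

section
/- Let p be a probability measure on ℝ^d with finite second moment and support Ω. For every x ∈ ℝ^d \ Σ_Ω, the denoiser m_σ(x) = E[X | X_σ = x] converges to proj_Ω(x) as σ → 0. -/
open MeasureTheory Metric Filter

/-- The (topological) support of a measure on a metric space: points all of whose balls
have positive measure. -/
def msupport {E : Type*} [MeasurableSpace E] [PseudoMetricSpace E] (p : Measure E) :
    Set E := {y | ∀ r : ℝ, 0 < r → 0 < p (Metric.ball y r)}

lemma isClosed_msupport {E : Type*} [MeasurableSpace E] [PseudoMetricSpace E] (p : Measure E) :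
    IsClosed (msupport p) := by
  rw [← isOpen_compl_iff, Metric.isOpen_iff]
  intro y hy
  simp only [Set.mem_compl_iff, msupport, Set.mem_setOf_eq, not_forall] at hy
  obtain ⟨r, hr, hr0⟩ := hy
  refine ⟨r / 2, by linarith, fun z hz => ?_⟩
  simp only [Set.mem_compl_iff, msupport, Set.mem_setOf_eq, not_forall]
  refine ⟨r / 2, by linarith, ?_⟩
  intro h
  have hsub : ball z (r / 2) ⊆ ball y r := by
    intro u hu
    rw [mem_ball] at *
    have := dist_triangle u z y
    linarith
  have : (0 : ENNReal) < p (ball y r) := lt_of_lt_of_le h (measure_mono hsub)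
  rw [not_lt] at hr0
  exact this.ne' (le_antisymm hr0 zero_le)

lemma ae_mem_msupport {d : ℕ} (p : Measure (EuclideanSpace ℝ (Fin d))) :
    ∀ᵐ y ∂p, y ∈ msupport p := by
  rw [ae_iff]
  apply measure_null_of_locally_null
  intro y hy
  simp only [Set.mem_setOf_eq, msupport, not_forall] at hy
  obtain ⟨r, hr, hr0⟩ := hy
  refine ⟨ball y r, mem_nhdsWithin_of_mem_nhds (ball_mem_nhds y hr), ?_⟩
  rw [not_lt] at hr0
  exact le_antisymm hr0 zero_le

lemma exists_eta {d : ℕ} (p : Measure (EuclideanSpace ℝ (Fin d)))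
    (x xΩ : EuclideanSpace ℝ (Fin d)) (hnear : ∀ y ∈ msupport p, dist x xΩ ≤ dist x y)
    (huniq : ∀ w, w ∈ msupport p → (∀ y ∈ msupport p, dist x w ≤ dist x y) → w = xΩ)
    {ε : ℝ} (hε : 0 < ε) :
    ∃ η : ℝ, 0 < η ∧ η ≤ 1 ∧
      ∀ y ∈ msupport p, y ∉ ball xΩ ε → dist x xΩ + η ≤ dist x y := by
  set R := dist x xΩ with hR
  set S : Set (EuclideanSpace ℝ (Fin d)) :=
    (msupport p ∩ closedBall x (R + 1)) ∩ (ball xΩ ε)ᶜ with hS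
  have hSclosed : IsClosed S :=
    (((isClosed_msupport p).inter isClosed_closedBall).inter isOpen_ball.isClosed_compl)
  have hScpt : IsCompact S :=
    (isCompact_closedBall x (R + 1)).of_isClosed_subset hSclosed fun y hy => hy.1.2
  by_cases hne : S.Nonempty
  · obtain ⟨w, hwS, hwmin⟩ :=
      hScpt.exists_isMinOn hne (Continuous.continuousOn (continuous_const.dist continuous_id))
    have hwsupp : w ∈ msupport p := hwS.1.1
    have hRw : R < dist x w := by
      rcases lt_or_eq_of_le (hnear w hwsupp) with h | h
      · exact h
      · exfalso
        have : w = xΩ := huniq w hwsupp (fun y hy => h ▸ hnear y hy)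
        have : w ∈ ball xΩ ε := by rw [this]; exact mem_ball_self hε
        exact hwS.2 this
    refine ⟨min 1 (dist x w - R), lt_min one_pos (by linarith), min_le_left _ _, ?_⟩
    intro y hy hyb
    by_cases hycb : dist x y ≤ R + 1
    · have hyS : y ∈ S := ⟨⟨hy, by rwa [mem_closedBall, dist_comm]⟩, hyb⟩
      have := hwmin hyS
      simp only [Function.comp] at this
      have h2 : min 1 (dist x w - R) ≤ dist x w - R := min_le_right _ _
      have : dist x w ≤ dist x y := this
      linarith
    · have := min_le_left 1 (dist x w - R)
      linarith [not_le.1 hycb]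
  · refine ⟨1, one_pos, le_refl 1, ?_⟩
    intro y hy hyb
    by_contra h
    push_neg at h
    exact hne ⟨y, ⟨⟨hy, by rw [mem_closedBall, dist_comm]; linarith⟩, hyb⟩⟩

noncomputable def wfn {d : ℕ} (x : EuclideanSpace ℝ (Fin d)) (σ : ℝ)
    (y : EuclideanSpace ℝ (Fin d)) : ℝ :=
  Real.exp (-‖x - y‖ ^ 2 / (2 * σ ^ 2))

lemma wfn_def {d : ℕ} (x : EuclideanSpace ℝ (Fin d)) (σ : ℝ)
    (y : EuclideanSpace ℝ (Fin d)) :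
    wfn x σ y = Real.exp (-‖x - y‖ ^ 2 / (2 * σ ^ 2)) := rfl

set_option maxHeartbeats 2000000 in
/-- Let `p` be a probability measure on `ℝ^d` with finite second moment and
support `Ω`.  For every `x` not on the medial axis of `Ω` (encoded: `xΩ` is the unique
nearest point of `Ω` to `x`), the denoiser
`m_σ(x) = (∫ e^{-‖x-y‖²/(2σ²)} dp)⁻¹ ∫ e^{-‖x-y‖²/(2σ²)} y dp` converges to
`proj_Ω(x) = xΩ` as `σ → 0⁺`. -/
theorem stmt9 {d : ℕ} (p : Measure (EuclideanSpace ℝ (Fin d))) [IsProbabilityMeasure p]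
    (hp2 : Integrable (fun y => ‖y‖ ^ 2) p)
    (x xΩ : EuclideanSpace ℝ (Fin d))
    (hxΩ : xΩ ∈ msupport p) (hnear : ∀ y ∈ msupport p, dist x xΩ ≤ dist x y)
    (huniq : ∀ w, w ∈ msupport p → (∀ y ∈ msupport p, dist x w ≤ dist x y) → w = xΩ) :
    Tendsto (fun σ : ℝ =>
        (∫ y, Real.exp (-‖x - y‖ ^ 2 / (2 * σ ^ 2)) ∂p)⁻¹ •
          ∫ y, Real.exp (-‖x - y‖ ^ 2 / (2 * σ ^ 2)) • y ∂p)
      (nhdsWithin 0 (Set.Ioi 0)) (nhds xΩ) := by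
  -- basic integrability facts
  have hy1 : Integrable (fun y : EuclideanSpace ℝ (Fin d) => ‖y‖) p := by
    refine ((integrable_const (1:ℝ)).add hp2).mono'
      continuous_norm.aestronglyMeasurable (ae_of_all _ fun y => ?_)
    simp only [norm_norm, Pi.add_apply]
    nlinarith [norm_nonneg y, sq_nonneg (‖y‖ - 1)]
  have hd : Integrable (fun y : EuclideanSpace ℝ (Fin d) => ‖y - xΩ‖) p := by
    refine (hy1.add (integrable_const ‖xΩ‖)).mono'
      ((continuous_id.sub continuous_const).norm.aestronglyMeasurable) (ae_of_all _ fun y => ?_)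
    simp only [norm_norm, Pi.add_apply]
    exact norm_sub_le _ _
  set M := ∫ y, ‖y - xΩ‖ ∂p with hM
  have hM0 : 0 ≤ M := integral_nonneg fun y => norm_nonneg _
  rw [Metric.tendsto_nhds]
  intro ε hε
  set R := dist x xΩ with hR
  have hR0 : 0 ≤ R := dist_nonneg
  obtain ⟨η, hη0, hη1, hfar⟩ := exists_eta p x xΩ hnear huniq (half_pos hε)
  have hcball : (0 : ENNReal) < p (ball xΩ (η / 2)) := hxΩ _ (by linarith)
  set c := (p (ball xΩ (η / 2))).toReal with hc
  have hc0 : 0 < c := ENNReal.toReal_pos hcball.ne' (measure_ne_top p _)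
  obtain ⟨a, ha⟩ : ∃ a : ℝ, a = (R + η) ^ 2 - (R + η / 2) ^ 2 := ⟨_, rfl⟩
  have ha0 : 0 < a := by rw [ha]; nlinarith
  -- the error term tends to 0
  have hgt : Tendsto (fun σ : ℝ => (M / c) * Real.exp (-a / (2 * σ ^ 2)))
      (nhdsWithin 0 (Set.Ioi 0)) (nhds 0) := by
    have h1 : Tendsto (fun σ : ℝ => σ ^ 2) (nhdsWithin 0 (Set.Ioi 0))
        (nhdsWithin 0 (Set.Ioi 0)) := by
      rw [tendsto_nhdsWithin_iff]
      constructor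
      · have : Tendsto (fun σ : ℝ => σ ^ 2) (nhds 0) (nhds 0) := by
          simpa using (continuous_pow 2).tendsto (0 : ℝ)
        exact this.mono_left nhdsWithin_le_nhds
      · filter_upwards [self_mem_nhdsWithin] with σ hσ
        exact pow_pos (Set.mem_Ioi.mp hσ) 2
    have h2 : Tendsto (fun σ : ℝ => a / 2 * (σ ^ 2)⁻¹) (nhdsWithin 0 (Set.Ioi 0)) atTop :=
      (tendsto_inv_nhdsGT_zero.comp h1).const_mul_atTop (by linarith)
    have h3 : Tendsto (fun σ : ℝ => -a / (2 * σ ^ 2)) (nhdsWithin 0 (Set.Ioi 0)) atBot := by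
      have : (fun σ : ℝ => -a / (2 * σ ^ 2)) = fun σ => -(a / 2 * (σ ^ 2)⁻¹) := by
        funext σ; field_simp
      rw [this]
      exact tendsto_neg_atBot_iff.mpr h2
    have h4 := Real.tendsto_exp_atBot.comp h3
    simpa using h4.const_mul (M / c)
  have hev : ∀ᶠ σ in nhdsWithin (0:ℝ) (Set.Ioi 0),
      (M / c) * Real.exp (-a / (2 * σ ^ 2)) < ε / 2 :=
    hgt.eventually_lt_const (half_pos hε)
  filter_upwards [self_mem_nhdsWithin, hev] with σ hσ hgσ
  have hσ0 : (0 : ℝ) < σ := hσ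
  have hs20 : (0 : ℝ) < 2 * σ ^ 2 := by positivity
  -- switch to wfn
  simp only [← wfn_def x σ]
  have hwpos : ∀ y, 0 < wfn x σ y := fun y => Real.exp_pos _
  have hwle1 : ∀ y, wfn x σ y ≤ 1 := by
    intro y
    rw [wfn, Real.exp_le_one_iff]
    have : (0:ℝ) ≤ ‖x - y‖ ^ 2 / (2 * σ ^ 2) := by positivity
    rw [neg_div]
    linarith
  have hwc : Continuous (wfn x σ) := by
    apply Real.continuous_exp.comp
    exact ((continuous_const.sub continuous_id).norm.pow 2).neg.div_const _
  have hIw : Integrable (wfn x σ) p := by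
    refine (integrable_const (1:ℝ)).mono' hwc.aestronglyMeasurable (ae_of_all _ fun y => ?_)
    rw [Real.norm_eq_abs, abs_of_pos (hwpos y)]
    exact hwle1 y
  have hIwy : Integrable (fun y => wfn x σ y • y) p := by
    refine hy1.mono' (hwc.smul continuous_id).aestronglyMeasurable (ae_of_all _ fun y => ?_)
    rw [norm_smul, Real.norm_eq_abs, abs_of_pos (hwpos y)]
    exact mul_le_of_le_one_left (norm_nonneg y) (hwle1 y)
  have hIwd : Integrable (fun y => wfn x σ y * ‖y - xΩ‖) p := by
    refine hd.mono' (hwc.mul (continuous_id.sub continuous_const).norm).aestronglyMeasurable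
      (ae_of_all _ fun y => ?_)
    rw [Real.norm_eq_abs, abs_of_nonneg (mul_nonneg (hwpos y).le (norm_nonneg _))]
    exact mul_le_of_le_one_left (norm_nonneg _) (hwle1 y)
  set I := ∫ y, wfn x σ y ∂p with hI
  -- lower bound for I
  have hlow : Real.exp (-(R + η / 2) ^ 2 / (2 * σ ^ 2)) * c ≤ I := by
    have h1 : ∀ y ∈ ball xΩ (η / 2), Real.exp (-(R + η / 2) ^ 2 / (2 * σ ^ 2)) ≤ wfn x σ y := by
      intro y hy
      rw [wfn, Real.exp_le_exp]
      have hxy : ‖x - y‖ ≤ R + η / 2 := by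
        rw [← dist_eq_norm]
        calc dist x y ≤ dist x xΩ + dist xΩ y := dist_triangle _ _ _
          _ ≤ R + η / 2 := by
              rw [dist_comm xΩ y]
              have := mem_ball.1 hy
              linarith
      have h2 : ‖x - y‖ ^ 2 ≤ (R + η / 2) ^ 2 := by nlinarith [norm_nonneg (x - y)]
      apply div_le_div_of_nonneg_right ?_ hs20.le
      linarith
    calc Real.exp (-(R + η / 2) ^ 2 / (2 * σ ^ 2)) * c
        ≤ ∫ y in ball xΩ (η / 2), wfn x σ y ∂p :=
          by have h := setIntegral_ge_of_const_le_real measurableSet_ball (measure_ne_top p _) h1 hIw.integrableOn; exact h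
      _ ≤ I := setIntegral_le_integral hIw (ae_of_all _ fun y => (hwpos y).le)
  have hL0 : (0:ℝ) < Real.exp (-(R + η / 2) ^ 2 / (2 * σ ^ 2)) * c := by positivity
  have hI0 : 0 < I := lt_of_lt_of_le hL0 hlow
  -- identity for the difference
  have hId : (∫ y, wfn x σ y ∂p)⁻¹ • (∫ y, wfn x σ y • y ∂p) - xΩ
      = I⁻¹ • ∫ y, wfn x σ y • (y - xΩ) ∂p := by
    have h1 : ∫ y, wfn x σ y • (y - xΩ) ∂p = (∫ y, wfn x σ y • y ∂p) - I • xΩ := by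
      rw [← integral_smul_const]
      rw [← integral_sub hIwy (hIw.smul_const xΩ)]
      simp [smul_sub]
    rw [h1, smul_sub, smul_smul, inv_mul_cancel₀ hI0.ne', one_smul, ← hI]
  -- numerator bound
  have hnum : ‖∫ y, wfn x σ y • (y - xΩ) ∂p‖
      ≤ (ε / 2) * I + Real.exp (-(R + η) ^ 2 / (2 * σ ^ 2)) * M := by
    have hnorm_eq : (fun y => ‖wfn x σ y • (y - xΩ)‖) = fun y => wfn x σ y * ‖y - xΩ‖ := by
      funext y
      rw [norm_smul, Real.norm_eq_abs, abs_of_pos (hwpos y)]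
    have hnear_bd : ∫ y in ball xΩ (ε / 2), wfn x σ y * ‖y - xΩ‖ ∂p ≤ (ε / 2) * I := by
      calc ∫ y in ball xΩ (ε / 2), wfn x σ y * ‖y - xΩ‖ ∂p
          ≤ ∫ y in ball xΩ (ε / 2), (ε / 2) * wfn x σ y ∂p := by
            refine setIntegral_mono_on hIwd.integrableOn (hIw.integrableOn.const_mul _)
              measurableSet_ball fun y hy => ?_
            have h2 : ‖y - xΩ‖ < ε / 2 := by rw [← dist_eq_norm]; exact mem_ball.1 hy
            nlinarith [hwpos y]
        _ = (ε / 2) * ∫ y in ball xΩ (ε / 2), wfn x σ y ∂p := integral_const_mul _ _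
        _ ≤ (ε / 2) * I := by
            have := setIntegral_le_integral hIw (ae_of_all _ fun y => (hwpos y).le)
              (s := ball xΩ (ε / 2))
            exact mul_le_mul_of_nonneg_left this (half_pos hε).le
    have hfar_bd : ∫ y in (ball xΩ (ε / 2))ᶜ, wfn x σ y * ‖y - xΩ‖ ∂p
        ≤ Real.exp (-(R + η) ^ 2 / (2 * σ ^ 2)) * M := by
      have hae : ∀ᵐ y ∂(p.restrict (ball xΩ (ε / 2))ᶜ),
          wfn x σ y * ‖y - xΩ‖ ≤ Real.exp (-(R + η) ^ 2 / (2 * σ ^ 2)) * ‖y - xΩ‖ := by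
        have h1 := ae_restrict_of_ae (s := (ball xΩ (ε / 2))ᶜ) (ae_mem_msupport p)
        have h2 : ∀ᵐ y ∂(p.restrict (ball xΩ (ε / 2))ᶜ), y ∈ (ball xΩ (ε / 2))ᶜ :=
          ae_restrict_mem measurableSet_ball.compl
        filter_upwards [h1, h2] with y hy hyc
        have hdist : R + η ≤ dist x y := hfar y hy hyc
        have h3 : (R + η) ^ 2 ≤ ‖x - y‖ ^ 2 := by
          rw [← dist_eq_norm]
          nlinarith [dist_nonneg (x := x) (y := y)]
        have hw : wfn x σ y ≤ Real.exp (-(R + η) ^ 2 / (2 * σ ^ 2)) := by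
          rw [wfn, Real.exp_le_exp]
          apply div_le_div_of_nonneg_right ?_ hs20.le
          linarith
        exact mul_le_mul_of_nonneg_right hw (norm_nonneg _)
      calc ∫ y in (ball xΩ (ε / 2))ᶜ, wfn x σ y * ‖y - xΩ‖ ∂p
          ≤ ∫ y in (ball xΩ (ε / 2))ᶜ, Real.exp (-(R + η) ^ 2 / (2 * σ ^ 2)) * ‖y - xΩ‖ ∂p :=
            integral_mono_ae hIwd.integrableOn (hd.integrableOn.const_mul _) hae
        _ = Real.exp (-(R + η) ^ 2 / (2 * σ ^ 2)) * ∫ y in (ball xΩ (ε / 2))ᶜ, ‖y - xΩ‖ ∂p :=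
            integral_const_mul _ _
        _ ≤ Real.exp (-(R + η) ^ 2 / (2 * σ ^ 2)) * M := by
            refine mul_le_mul_of_nonneg_left ?_ (Real.exp_nonneg _)
            exact setIntegral_le_integral hd (ae_of_all _ fun y => norm_nonneg _)
    calc ‖∫ y, wfn x σ y • (y - xΩ) ∂p‖ ≤ ∫ y, ‖wfn x σ y • (y - xΩ)‖ ∂p :=
          norm_integral_le_integral_norm _
      _ = ∫ y, wfn x σ y * ‖y - xΩ‖ ∂p := by rw [hnorm_eq]
      _ = (∫ y in ball xΩ (ε / 2), wfn x σ y * ‖y - xΩ‖ ∂p)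
          + ∫ y in (ball xΩ (ε / 2))ᶜ, wfn x σ y * ‖y - xΩ‖ ∂p :=
          (integral_add_compl measurableSet_ball hIwd).symm
      _ ≤ (ε / 2) * I + Real.exp (-(R + η) ^ 2 / (2 * σ ^ 2)) * M := add_le_add hnear_bd hfar_bd
  -- combine
  rw [dist_eq_norm, hId, norm_smul, Real.norm_eq_abs, abs_of_pos (inv_pos.2 hI0)]
  have hkey : (Real.exp (-(R + η / 2) ^ 2 / (2 * σ ^ 2)) * c)⁻¹
      * (Real.exp (-(R + η) ^ 2 / (2 * σ ^ 2)) * M)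
      = (M / c) * Real.exp (-a / (2 * σ ^ 2)) := by
    have h1 : Real.exp (-a / (2 * σ ^ 2))
        = Real.exp (-(R + η) ^ 2 / (2 * σ ^ 2)) / Real.exp (-(R + η / 2) ^ 2 / (2 * σ ^ 2)) := by
      rw [← Real.exp_sub]
      congr 1
      rw [ha]
      ring
    rw [h1]
    rw [mul_inv]
    field_simp
  calc I⁻¹ * ‖∫ y, wfn x σ y • (y - xΩ) ∂p‖
      ≤ I⁻¹ * ((ε / 2) * I + Real.exp (-(R + η) ^ 2 / (2 * σ ^ 2)) * M) :=
        mul_le_mul_of_nonneg_left hnum (inv_nonneg.2 hI0.le)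
    _ = ε / 2 + I⁻¹ * (Real.exp (-(R + η) ^ 2 / (2 * σ ^ 2)) * M) := by
        rw [mul_add, ← mul_assoc, mul_comm I⁻¹ (ε / 2), mul_assoc, inv_mul_cancel₀ hI0.ne',
          mul_one]
    _ ≤ ε / 2 + (Real.exp (-(R + η / 2) ^ 2 / (2 * σ ^ 2)) * c)⁻¹
        * (Real.exp (-(R + η) ^ 2 / (2 * σ ^ 2)) * M) := by
        refine add_le_add (le_refl _) ?_
        refine mul_le_mul_of_nonneg_right ?_ (mul_nonneg (Real.exp_nonneg _) hM0)
        exact inv_anti₀ hL0 hlow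
    _ = ε / 2 + (M / c) * Real.exp (-a / (2 * σ ^ 2)) := by rw [hkey]
    _ < ε / 2 + ε / 2 := by linarith
    _ = ε := by ring
end

section
/- Let p = Σᵢ aᵢ δ_{xᵢ} be a discrete probability measure with support Ω. For x ∉ Σ_Ω with nearest point xᵢ = proj_Ω(x), the denoiser satisfies ‖m_σ(x) - xᵢ‖ ≤ diam(Ω) · √((1 - aᵢ)/aᵢ) · exp(-Δ_Ω(x)/(4σ²)), where Δ_Ω(x) is the gap between the squared second-smallest and squared smallest distances from x to points of Ω. -/
open MeasureTheory Metric

/-- The smallest distance value `d_Ω(x; 1)` from `x` to the set `Ω = {x₁, …, x_N}`. -/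
noncomputable def firstDist {d N : ℕ} (pts : Fin N → EuclideanSpace ℝ (Fin d))
    (x : EuclideanSpace ℝ (Fin d)) : ℝ :=
  sInf (Set.range fun i => dist x (pts i))

open Classical in
/-- The gap `Δ_Ω(x) = d_Ω(x;2)² - d_Ω(x;1)²` between the squares of the two smallest
distance *values* from `x` to `Ω` (`0` if all distance values coincide). -/
noncomputable def distGapSq {d N : ℕ} (pts : Fin N → EuclideanSpace ℝ (Fin d))
    (x : EuclideanSpace ℝ (Fin d)) : ℝ :=
  if ∃ i, firstDist pts x < dist x (pts i) then
    sInf {r | (∃ i, dist x (pts i) = r) ∧ firstDist pts x < r} ^ 2 - firstDist pts x ^ 2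
  else 0

lemma sqrt_exp' (x : ℝ) : Real.sqrt (Real.exp x) = Real.exp (x/2) := by
  rw [show Real.exp x = Real.exp (x/2) * Real.exp (x/2) by rw [← Real.exp_add]; ring_nf]
  exact Real.sqrt_mul_self (Real.exp_pos _).le

/-- For the discrete probability measure `p = Σᵢ aᵢ δ_{xᵢ}` with support `Ω`,
and `x` off the medial axis of `Ω` with unique nearest point `x_{i₀} = proj_Ω(x)`, the
denoiser (Gaussian-weighted mean of the data points) satisfies
`‖m_σ(x) - x_{i₀}‖ ≤ diam(Ω) √((1-a_{i₀})/a_{i₀}) e^{-Δ_Ω(x)/(4σ²)}`. -/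
theorem stmt13 {d N : ℕ} (pts : Fin N → EuclideanSpace ℝ (Fin d))
    (hinj : Function.Injective pts)
    (a : Fin N → ℝ) (ha : ∀ i, 0 < a i) (hsum : ∑ i, a i = 1)
    (σ : ℝ) (hσ : 0 < σ) (x : EuclideanSpace ℝ (Fin d)) (i₀ : Fin N)
    (hi₀ : ∀ j, j ≠ i₀ → dist x (pts i₀) < dist x (pts j)) :
    ‖((∑ j, a j * Real.exp (-dist x (pts j) ^ 2 / (2 * σ ^ 2)))⁻¹ •
        ∑ i, (a i * Real.exp (-dist x (pts i) ^ 2 / (2 * σ ^ 2))) • pts i) - pts i₀‖ ≤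
      Metric.diam (Set.range pts) * Real.sqrt ((1 - a i₀) / a i₀) *
        Real.exp (-distGapSq pts x / (4 * σ ^ 2)) := by
  classical
  set w : Fin N → ℝ := fun i => a i * Real.exp (-dist x (pts i) ^ 2 / (2 * σ ^ 2)) with hw
  have hwpos : ∀ i, 0 < w i := fun i => mul_pos (ha i) (Real.exp_pos _)
  set W : ℝ := ∑ i, w i with hWdef
  have hWpos : 0 < W := Finset.sum_pos (fun i _ => hwpos i) ⟨i₀, Finset.mem_univ _⟩
  set D := Metric.diam (Set.range pts) with hD
  have hDnn : 0 ≤ D := Metric.diam_nonneg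
  have hσ2 : 0 < 2 * σ ^ 2 := by positivity
  -- firstDist equals dist to the nearest point
  have hfd : firstDist pts x = dist x (pts i₀) := by
    unfold firstDist
    apply le_antisymm
    · exact csInf_le (Set.Finite.bddBelow (Set.finite_range _)) ⟨i₀, rfl⟩
    · refine le_csInf ⟨_, ⟨i₀, rfl⟩⟩ ?_
      rintro r ⟨j, rfl⟩
      by_cases h : j = i₀
      · simp [h]
      · exact (hi₀ j h).le
  set Δ := distGapSq pts x with hΔ
  -- key inequality for non-nearest points
  have hkey : ∀ j, j ≠ i₀ → dist x (pts i₀) ^ 2 + Δ ≤ dist x (pts j) ^ 2 := by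
    intro j hj
    have hcond : ∃ i, firstDist pts x < dist x (pts i) := ⟨j, by rw [hfd]; exact hi₀ j hj⟩
    rw [hΔ, distGapSq, if_pos hcond]
    set T := {r | (∃ i, dist x (pts i) = r) ∧ firstDist pts x < r}
    have hmem : dist x (pts j) ∈ T := ⟨⟨j, rfl⟩, by rw [hfd]; exact hi₀ j hj⟩
    have hbdd : BddBelow T := by
      refine ⟨0, ?_⟩
      rintro r ⟨⟨i, rfl⟩, -⟩
      exact dist_nonneg
    have h1 : sInf T ≤ dist x (pts j) := csInf_le hbdd hmem
    have h0 : (0:ℝ) ≤ sInf T := by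
      refine le_csInf ⟨_, hmem⟩ ?_
      rintro r ⟨⟨i, rfl⟩, -⟩
      exact dist_nonneg
    rw [hfd]
    nlinarith
  -- rewrite the vector difference
  have hvec : (W⁻¹ • ∑ i, w i • pts i) - pts i₀
      = W⁻¹ • ∑ i, w i • (pts i - pts i₀) := by
    rw [show (∑ i, w i • (pts i - pts i₀)) = (∑ i, w i • pts i) - W • pts i₀ by
      simp_rw [smul_sub]
      rw [Finset.sum_sub_distrib, ← Finset.sum_smul, ← hWdef]]
    rw [smul_sub, inv_smul_smul₀ hWpos.ne']
  set S : ℝ := ∑ i ∈ Finset.univ.erase i₀, w i with hS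
  have hSnn : 0 ≤ S := Finset.sum_nonneg fun i _ => (hwpos i).le
  have hWS : W = w i₀ + S := by
    rw [hWdef, hS, ← Finset.add_sum_erase _ w (Finset.mem_univ i₀)]
  -- norm bound
  have hnorm : ‖(W⁻¹ • ∑ i, w i • pts i) - pts i₀‖ ≤ W⁻¹ * (S * D) := by
    rw [hvec, norm_smul, norm_inv, Real.norm_eq_abs, abs_of_pos hWpos]
    refine mul_le_mul_of_nonneg_left ?_ (by positivity)
    calc ‖∑ i, w i • (pts i - pts i₀)‖ ≤ ∑ i, ‖w i • (pts i - pts i₀)‖ :=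
          norm_sum_le _ _
      _ = ∑ i ∈ Finset.univ.erase i₀, ‖w i • (pts i - pts i₀)‖ := by
          rw [← Finset.add_sum_erase _ _ (Finset.mem_univ i₀)]
          simp
      _ ≤ ∑ i ∈ Finset.univ.erase i₀, w i * D := by
          refine Finset.sum_le_sum fun i hi => ?_
          rw [norm_smul, Real.norm_eq_abs, abs_of_pos (hwpos i)]
          refine mul_le_mul_of_nonneg_left ?_ (hwpos i).le
          rw [← dist_eq_norm]
          exact Metric.dist_le_diam_of_mem
            ((Set.finite_range pts).isBounded) ⟨i, rfl⟩ ⟨i₀, rfl⟩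
      _ = S * D := by rw [hS, Finset.sum_mul]
  refine hnorm.trans ?_
  -- the ratio bound
  set E := Real.exp (-Δ / (4 * σ ^ 2)) with hE
  set c := (1 - a i₀) / a i₀ with hc
  have hcnn : 0 ≤ c := by
    have : a i₀ ≤ 1 := by
      rw [← hsum]
      exact Finset.single_le_sum (fun i _ => (ha i).le) (Finset.mem_univ i₀)
    exact div_nonneg (by linarith) (ha i₀).le
  have hratio : W⁻¹ * S ≤ Real.sqrt c * E := by
    have hr1 : W⁻¹ * S ≤ 1 := by
      rw [inv_mul_le_iff₀ hWpos, mul_one, hWS]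
      linarith [hwpos i₀]
    have hrnn : 0 ≤ W⁻¹ * S := by positivity
    set t := c * Real.exp (-Δ / (2 * σ ^ 2)) with ht
    have htnn : 0 ≤ t := mul_nonneg hcnn (Real.exp_pos _).le
    have hrt : W⁻¹ * S ≤ t := by
      have hSle : S ≤ (1 - a i₀) * Real.exp (-(dist x (pts i₀) ^ 2 + Δ) / (2 * σ ^ 2)) := by
        have h1a : (1 - a i₀) = ∑ i ∈ Finset.univ.erase i₀, a i := by
          have := Finset.add_sum_erase Finset.univ a (Finset.mem_univ i₀)
          rw [hsum] at this
          linarith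
        rw [h1a, Finset.sum_mul, hS]
        refine Finset.sum_le_sum fun i hi => ?_
        refine mul_le_mul_of_nonneg_left ?_ (ha i).le
        apply Real.exp_le_exp.mpr
        have := hkey i (Finset.ne_of_mem_erase hi)
        rw [div_le_div_iff₀ hσ2 hσ2]
        nlinarith
      have hw0 : w i₀ = a i₀ * Real.exp (-dist x (pts i₀) ^ 2 / (2 * σ ^ 2)) := rfl
      have hWge : w i₀ ≤ W := by rw [hWS]; linarith
      have hmono : W⁻¹ * S ≤ (w i₀)⁻¹ * S := by
        refine mul_le_mul_of_nonneg_right ?_ hSnn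
        exact inv_anti₀ (hwpos i₀) hWge
      refine hmono.trans ?_
      rw [inv_mul_le_iff₀ (hwpos i₀)]
      have ha0 : (a i₀ : ℝ) ≠ 0 := (ha i₀).ne'
      calc S ≤ (1 - a i₀) * Real.exp (-(dist x (pts i₀) ^ 2 + Δ) / (2 * σ ^ 2)) := hSle
        _ = w i₀ * t := by
            show _ = a i₀ * Real.exp (-dist x (pts i₀) ^ 2 / (2 * σ ^ 2)) *
              ((1 - a i₀) / a i₀ * Real.exp (-Δ / (2 * σ ^ 2)))
            rw [show (-(dist x (pts i₀) ^ 2 + Δ) / (2 * σ ^ 2))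
              = (-dist x (pts i₀) ^ 2 / (2 * σ ^ 2)) + (-Δ / (2 * σ ^ 2)) by ring]
            rw [Real.exp_add]
            field_simp
    have hsq : (W⁻¹ * S) ^ 2 ≤ t := by nlinarith
    have := (Real.le_sqrt hrnn htnn).mpr hsq
    refine this.trans_eq ?_
    rw [ht, Real.sqrt_mul hcnn, sqrt_exp', hE,
      show (-Δ / (2 * σ ^ 2)) / 2 = -Δ / (4 * σ ^ 2) by ring]
  calc W⁻¹ * (S * D) = D * (W⁻¹ * S) := by ring
    _ ≤ D * (Real.sqrt c * E) := mul_le_mul_of_nonneg_left hratio hDnn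
    _ = D * Real.sqrt c * E := by ring
end
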